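/- arXiv:math/0503533 — 2 statements merged into one kernel-verified Lean document; each statement's English description precedes it below -/
import Mathlib

section
/- Let g be a finite-dimensional real Lie algebra and φ a Lie algebra automorphism of g with φ⁴ = id; set h = ker(φ − id) and m = im(φ − id), so that g = h ⊕ m, m is φ-invariant, and θ = φ|_m. Let ⟨·,·⟩ be an inner product on m that is naturally reductive and θ-invariant, and let f = ½(θ − θ³) (the canonical f-structure of the homogeneous 4-symmetric space). Define (∇_X f)(Y) = ½([X, fY]_m − f([X,Y]_m)) and T(X,Y) = ¼ f((∇_{fX} f)(fY) − (∇_{f²X} f)(f²Y)), and set m₁ = im f, m₂ = ker f. Then: (i) T(X,Y) = 0 for all X, Y ∈ m (f is a Hermitian f-structure); (ii) (∇_{fX} f)(fX) = 0 for all X ∈ m (f is a nearly Kähler f-structure); (iii) the following conditions are equivalent: (1) (∇_X f)(Y) = 0 for all X,Y ∈ m (f is Kähler); (2) (∇_X f)(X) = 0 for all X ∈ m (f is Killing); (3) [m₁, m₁] ⊆ h; (4) [m₁, m₂] = 0; (5) [m, m] ⊆ h (the space is locally symmetric). -/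
/-- The canonical f-structure f = ½(θ − θ³) on a naturally reductive
homogeneous 4-symmetric space is both a Hermitian f-structure and a nearly
Kähler f-structure; moreover being Kähler, Killing, [m₁,m₁] ⊆ h,
[m₁,m₂] = 0 and local symmetry are all equivalent. -/
theorem stmt_18 (g : Type*) [LieRing g] [LieAlgebra ℝ g] [FiniteDimensional ℝ g]
    (φ : g ≃ₗ⁅ℝ⁆ g) (hφ4 : ∀ X : g, φ (φ (φ (φ X))) = X)
    (A : g →ₗ[ℝ] g) (hA : A = (φ.toLieHom : g →ₗ[ℝ] g) - LinearMap.id)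
    (h m : Submodule ℝ g) (hh : h = LinearMap.ker A) (hm : m = LinearMap.range A)
    -- g = h ⊕ m
    (hc : IsCompl h m)
    -- θ = φ|_m (m is φ-invariant)
    (θ : m →ₗ[ℝ] m) (hθ : ∀ X : m, (θ X : g) = φ X)
    -- the inner product on m, naturally reductive and θ-invariant
    (B : m →ₗ[ℝ] m →ₗ[ℝ] ℝ)
    (hBsymm : ∀ X Y : m, B X Y = B Y X)
    (hBpos : ∀ X : m, X ≠ 0 → 0 < B X X)
    (hBnat : ∀ X Y Z : m,
      B (m.linearProjOfIsCompl h hc.symm ⁅(X : g), (Y : g)⁆) Z =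
        B X (m.linearProjOfIsCompl h hc.symm ⁅(Y : g), (Z : g)⁆))
    (hBθ : ∀ X Y : m, B (θ X) (θ Y) = B X Y)
    -- the canonical f-structure f = ½(θ − θ³)
    (f : m →ₗ[ℝ] m) (hf : ∀ X : m, f X = (1 / 2 : ℝ) • (θ X - θ (θ (θ X))))
    -- the covariant derivative and the composition tensor
    (nabla : m → m → m)
    (hnabla : ∀ X Y : m, nabla X Y = (1 / 2 : ℝ) •
      (m.linearProjOfIsCompl h hc.symm ⁅(X : g), (f Y : g)⁆ -
        f (m.linearProjOfIsCompl h hc.symm ⁅(X : g), (Y : g)⁆)))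
    (T : m → m → m)
    (hT : ∀ X Y : m, T X Y = (1 / 4 : ℝ) •
      f (nabla (f X) (f Y) - nabla (f (f X)) (f (f Y)))) :
    -- (i) f is a Hermitian f-structure
    (∀ X Y : m, T X Y = 0) ∧
    -- (ii) f is a nearly Kähler f-structure
    (∀ X : m, nabla (f X) (f X) = 0) ∧
    -- (iii) the equivalences
    List.TFAE [
      -- (1) f is a Kähler f-structure
      ∀ X Y : m, nabla X Y = 0,
      -- (2) f is a Killing f-structure
      ∀ X : m, nabla X X = 0,
      -- (3) [m₁, m₁] ⊆ h
      ∀ X Y : m, X ∈ LinearMap.range f → Y ∈ LinearMap.range f →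
        ⁅(X : g), (Y : g)⁆ ∈ h,
      -- (4) [m₁, m₂] = 0
      ∀ X Y : m, X ∈ LinearMap.range f → Y ∈ LinearMap.ker f →
        ⁅(X : g), (Y : g)⁆ = 0,
      -- (5) the space is locally symmetric: [m, m] ⊆ h
      ∀ X Y : m, ⁅(X : g), (Y : g)⁆ ∈ h] := by
  set π := m.linearProjOfIsCompl h hc.symm with hπdef
  -- ## basic facts about the projection
  have hπm : ∀ X : m, π (X : g) = X := fun X =>
    Submodule.linearProjOfIsCompl_apply_left hc.symm X
  have hπmem : ∀ v : g, π v = 0 ↔ v ∈ h := fun v =>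
    Submodule.linearProjOfIsCompl_apply_eq_zero_iff hc.symm
  have hadd : ∀ a b : g, φ (a + b) = φ a + φ b := fun a b => φ.toLinearEquiv.map_add a b
  have hfix : ∀ z : g, z ∈ h → φ z = z := by
    intro z hz
    rw [hh, LinearMap.mem_ker, hA] at hz
    have : (φ z : g) - z = 0 := by simpa using hz
    rw [sub_eq_zero] at this
    exact this
  have hπφ : ∀ v : g, π (φ v) = θ (π v) := by
    intro v
    have hv : v - (π v : g) ∈ h := by
      rw [← hπmem]; simp [map_sub, hπm]
    have hsplit : φ v = (v - (π v : g)) + (θ (π v) : g) := by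
      calc φ v = φ ((v - (π v : g)) + (π v : g)) := by rw [sub_add_cancel]
      _ = φ (v - (π v : g)) + φ ((π v : g)) := hadd _ _
      _ = (v - (π v : g)) + (θ (π v) : g) := by rw [hfix _ hv, hθ]
    rw [hsplit, map_add, (hπmem _).mpr hv, zero_add, hπm]
  -- ## θ has order 4 and no fixed vectors
  have hθ4 : ∀ X : m, θ (θ (θ (θ X))) = X := by
    intro X
    apply Subtype.ext
    rw [hθ, hθ, hθ, hθ, hφ4]
  have hfix0 : ∀ W : m, θ W = W → W = 0 := by
    intro W hW
    have hφW : φ (W : g) = (W : g) := by rw [← hθ, hW]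
    have hWh : (W : g) ∈ h := by
      rw [hh, LinearMap.mem_ker, hA]
      have : (φ.toLieHom : g →ₗ[ℝ] g) (W : g) = φ (W : g) := rfl
      simp only [LinearMap.sub_apply, LinearMap.id_apply, this, hφW, sub_self]
    have : (W : g) ∈ h ⊓ m := ⟨hWh, W.2⟩
    rw [hc.inf_eq_bot, Submodule.mem_bot] at this
    exact Subtype.ext this
  have himp : ∀ X : m, θ (θ X) = X → θ X = -X := by
    intro X hX
    have hsum : X + θ X + θ (θ X) + θ (θ (θ X)) = 0 := by
      apply hfix0
      simp only [map_add, hθ4]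
      abel
    rw [hX] at hsum
    have h2 : (2 : ℝ) • (X + θ X) = 0 := by
      rw [two_smul]
      calc (X + θ X) + (X + θ X) = X + θ X + X + θ X := by abel
      _ = 0 := hsum
    have h3 := (smul_eq_zero.mp h2).resolve_left (by norm_num)
    exact eq_neg_of_add_eq_zero_right h3
  -- ## the two eigenspace conditions and f
  have hθm1 : ∀ Z : m, θ (θ Z) = -Z → θ (θ (θ Z)) = -(θ Z) := by
    intro Z hZ; rw [hZ, map_neg]
  have hθm2 : ∀ Z : m, θ Z = -Z → θ (θ Z) = Z := by
    intro Z hZ; rw [hZ, map_neg, hZ, neg_neg]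
  have hf1 : ∀ X : m, θ (θ X) = -X → f X = θ X := by
    intro X hX
    rw [hf, hX, map_neg]
    module
  have hf2 : ∀ X : m, θ X = -X → f X = 0 := by
    intro X hX
    have h2 : θ (θ X) = X := hθm2 X hX
    rw [hf, h2, hX]
    module
  have hker : ∀ X : m, f X = 0 → θ X = -X := by
    intro X hX
    rw [hf] at hX
    have h1 : θ X - θ (θ (θ X)) = 0 :=
      (smul_eq_zero.mp hX).resolve_left (by norm_num)
    have h2 : θ X = θ (θ (θ X)) := by rwa [sub_eq_zero] at h1
    apply himp
    have := congrArg θ h2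
    rwa [hθ4] at this
  have hfm1 : ∀ Z : m, θ (θ (f Z)) = -(f Z) := by
    intro Z
    rw [hf]
    simp only [map_smul, map_sub]
    rw [hθ4]
    module
  have hrange : ∀ X : m, X ∈ LinearMap.range f ↔ θ (θ X) = -X := by
    intro X
    constructor
    · rintro ⟨Y, rfl⟩; exact hfm1 Y
    · intro hX
      have h4 : θ (θ (θ X)) = -(θ X) := by rw [hX, map_neg]
      have h3 : θ (θ (θ (θ (θ X)))) = -(θ (θ (θ X))) := by
        have h5 : θ (θ (θ (θ (θ X)))) = θ X := by rw [hθ4]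
        rw [h5, h4, neg_neg]
      exact ⟨θ (θ (θ X)), by rw [hf1 _ h3, hθ4]⟩
  have hdec : ∀ X : m, ∃ X₁ X₂ : m, θ (θ X₁) = -X₁ ∧ θ X₂ = -X₂ ∧ X = X₁ + X₂ := by
    intro X
    refine ⟨(1/2 : ℝ) • (X - θ (θ X)), (1/2 : ℝ) • (X + θ (θ X)), ?_, ?_, by module⟩
    · simp only [map_smul, map_sub]
      rw [hθ4]
      module
    · apply himp
      simp only [map_smul, map_add]
      rw [hθ4]
      module
  -- ## bracket lemmas
  have hlie : ∀ a b : g, φ ⁅a, b⁆ = ⁅φ a, φ b⁆ := LieHom.map_lie _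
  have hbθ : ∀ X Y : m, θ (π ⁅(X : g), (Y : g)⁆) = π ⁅((θ X) : g), ((θ Y) : g)⁆ := by
    intro X Y
    rw [hθ, hθ, ← hlie, hπφ]
  have hbskew : ∀ X Y : m, π ⁅(X : g), (Y : g)⁆ = -π ⁅(Y : g), (X : g)⁆ := by
    intro X Y
    rw [← lie_skew, map_neg]
  have hb11 : ∀ X Y : m, θ (θ X) = -X → θ (θ Y) = -Y →
      θ (π ⁅(X : g), (Y : g)⁆) = -π ⁅(X : g), (Y : g)⁆ := by
    intro X Y hX hY
    apply himp
    rw [hbθ, hbθ, hX, hY]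
    simp [neg_lie, lie_neg]
  have hb12 : ∀ X Y : m, θ (θ X) = -X → θ Y = -Y →
      θ (θ (π ⁅(X : g), (Y : g)⁆)) = -π ⁅(X : g), (Y : g)⁆ := by
    intro X Y hX hY
    rw [hbθ, hbθ, hX, hθm2 Y hY]
    simp only [NegMemClass.coe_neg, neg_lie, map_neg]
  have hb22 : ∀ X Y : m, θ X = -X → θ Y = -Y → π ⁅(X : g), (Y : g)⁆ = 0 := by
    intro X Y hX hY
    apply hfix0
    rw [hbθ, hX, hY]
    simp [neg_lie, lie_neg]
  have hb1self : ∀ X : m, θ (θ X) = -X → π ⁅(X : g), ((θ X) : g)⁆ = 0 := by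
    intro X hX
    apply hfix0
    rw [hbθ, hX]
    have : ⁅((θ X) : g), ((-X : m) : g)⁆ = ⁅(X : g), ((θ X) : g)⁆ := by
      simp only [NegMemClass.coe_neg, lie_neg, lie_skew]
    rw [this]
  -- ## metric lemmas
  have hBdef : ∀ X : m, B X X = 0 → X = 0 := by
    intro X h0
    by_contra hne
    exact absurd h0 (ne_of_gt (hBpos X hne))
  have hQP3 : (∀ A' C : m, θ (θ A') = -A' → θ C = -C → π ⁅(A' : g), (C : g)⁆ = 0) →
      ∀ X Y : m, θ (θ X) = -X → θ (θ Y) = -Y → π ⁅(X : g), (Y : g)⁆ = 0 := by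
    intro hQ X Y hX hY
    have hW2 : θ (π ⁅(X : g), (Y : g)⁆) = -π ⁅(X : g), (Y : g)⁆ := hb11 X Y hX hY
    apply hBdef
    rw [hBnat X Y _, hQ Y _ hY hW2, map_zero]
  have hP3Q : (∀ A' C : m, θ (θ A') = -A' → θ (θ C) = -C → π ⁅(A' : g), (C : g)⁆ = 0) →
      ∀ X Y : m, θ (θ X) = -X → θ Y = -Y → π ⁅(X : g), (Y : g)⁆ = 0 := by
    intro hP3 X Y hX hY
    have hV : θ (θ (π ⁅(X : g), (Y : g)⁆)) = -π ⁅(X : g), (Y : g)⁆ := hb12 X Y hX hY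
    apply hBdef
    calc B (π ⁅(X : g), (Y : g)⁆) (π ⁅(X : g), (Y : g)⁆)
        = B (-π ⁅(Y : g), (X : g)⁆) (π ⁅(X : g), (Y : g)⁆) := by rw [← hbskew]
      _ = -(B (π ⁅(Y : g), (X : g)⁆) (π ⁅(X : g), (Y : g)⁆)) := by
          rw [map_neg, LinearMap.neg_apply]
      _ = -(B Y (π ⁅(X : g), ((π ⁅(X : g), (Y : g)⁆ : m) : g)⁆)) := by rw [hBnat]
      _ = 0 := by rw [hP3 X _ hX hV, map_zero, neg_zero]
  have hball : (∀ A' C : m, θ (θ A') = -A' → θ C = -C → π ⁅(A' : g), (C : g)⁆ = 0) →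
      ∀ X Y : m, π ⁅(X : g), (Y : g)⁆ = 0 := by
    intro hQ X Y
    have hP3 := hQP3 hQ
    obtain ⟨X₁, X₂, hX1, hX2, rfl⟩ := hdec X
    obtain ⟨Y₁, Y₂, hY1, hY2, rfl⟩ := hdec Y
    have h21 : π ⁅(X₂ : g), (Y₁ : g)⁆ = 0 := by
      rw [hbskew, hQ Y₁ X₂ hY1 hX2, neg_zero]
    simp only [Submodule.coe_add, add_lie, lie_add, map_add]
    rw [hP3 X₁ Y₁ hX1 hY1, hQ X₁ Y₂ hX1 hY2, hb22 X₂ Y₂ hX2 hY2, h21]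
    simp
  -- ## part (ii)
  have part2 : ∀ X : m, nabla (f X) (f X) = 0 := by
    intro X
    rw [hnabla]
    have h1 : f (f X) = θ (f X) := hf1 _ (hfm1 X)
    have h2 : π ⁅((f X) : g), ((f X) : g)⁆ = 0 := by
      rw [lie_self, map_zero]
    rw [h1, hb1self _ (hfm1 X), h2, map_zero, sub_zero, smul_zero]
  -- ## part (i)
  have part1 : ∀ X Y : m, T X Y = 0 := by
    intro X Y
    rw [hT]
    have hA1 : θ (θ (f X)) = -(f X) := hfm1 X
    have hB1 : θ (θ (f Y)) = -(f Y) := hfm1 Y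
    have hA1' : θ (θ (θ (f X))) = -(θ (f X)) := hθm1 _ hA1
    have hB1' : θ (θ (θ (f Y))) = -(θ (f Y)) := hθm1 _ hB1
    have hfA : f (f X) = θ (f X) := hf1 _ hA1
    have hfB : f (f Y) = θ (f Y) := hf1 _ hB1
    have hfθB : f (θ (f Y)) = -(f Y) := by rw [hf1 _ hB1', hB1]
    have hm2AB : f (π ⁅((f X) : g), ((f Y) : g)⁆) = 0 :=
      hf2 _ (hb11 _ _ hA1 hB1)
    have hm2' : f (π ⁅((θ (f X)) : g), ((θ (f Y)) : g)⁆) = 0 :=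
      hf2 _ (hb11 _ _ hA1' hB1')
    have hu : f (π ⁅((f X) : g), ((θ (f Y)) : g)⁆) = 0 :=
      hf2 _ (hb11 _ _ hA1 hB1')
    have hv : f (π ⁅((θ (f X)) : g), ((f Y) : g)⁆) = 0 :=
      hf2 _ (hb11 _ _ hA1' hB1)
    have hc1 : π ⁅((θ (f X)) : g), ((-(f Y) : m) : g)⁆ = -π ⁅((θ (f X)) : g), ((f Y) : g)⁆ := by
      simp only [NegMemClass.coe_neg, lie_neg, map_neg]
    rw [hnabla, hnabla, hfA, hfB, hfθB, hm2AB, hm2', hc1, sub_zero, sub_zero]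
    simp only [map_smul, map_sub, map_neg, hu, hv]
    simp
  refine ⟨part1, part2, ?_⟩
  -- ## part (iii)
  have hQ_of_2 : (∀ X : m, nabla X X = 0) →
      ∀ A' C : m, θ (θ A') = -A' → θ C = -C → π ⁅(A' : g), (C : g)⁆ = 0 := by
    intro h2 A' C hA' hC
    have hA3 : θ (θ (θ A')) = -(θ A') := hθm1 A' hA'
    have hA4 : θ (θ (θ (θ A'))) = -(θ (θ A')) := hθm1 _ hA3
    have hD : θ (θ (θ (θ (θ A')))) = -(θ (θ (θ A'))) := hθm1 _ hA4
    set D := θ (θ (θ A')) with hDdef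
    have hθD : θ D = A' := hθ4 A'
    have hfD : f D = A' := by rw [hf1 D hD, hθD]
    have hfC : f C = 0 := hf2 C hC
    have hDA : π ⁅(D : g), (A' : g)⁆ = 0 := by
      rw [← hθD]; exact hb1self D hD
    have hX := h2 (D + C)
    rw [hnabla] at hX
    have hfDC : f (D + C) = A' := by rw [map_add, hfD, hfC, add_zero]
    have hself : π ⁅((D + C : m) : g), ((D + C : m) : g)⁆ = 0 := by
      rw [lie_self, map_zero]
    rw [hfDC, hself, map_zero, sub_zero] at hX
    have hX' : π ⁅((D + C : m) : g), (A' : g)⁆ = 0 :=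
      (smul_eq_zero.mp hX).resolve_left (by norm_num)
    have hCA : π ⁅(C : g), (A' : g)⁆ = 0 := by
      have : π ⁅(D : g), (A' : g)⁆ + π ⁅(C : g), (A' : g)⁆ = 0 := by
        rw [← map_add, ← add_lie, ← Submodule.coe_add]
        exact hX'
      rwa [hDA, zero_add] at this
    rw [hbskew, hCA, neg_zero]
  tfae_have 1 → 2 := fun h1 X => h1 X X
  tfae_have 2 → 5 := by
    intro h2 X Y
    exact (hπmem _).mp (hball (hQ_of_2 h2) X Y)
  tfae_have 5 → 3 := fun h5 X Y _ _ => h5 X Y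
  tfae_have 5 → 1 := by
    intro h5 X Y
    rw [hnabla]
    have hz : ∀ U V : m, π ⁅(U : g), (V : g)⁆ = 0 := fun U V => (hπmem _).mpr (h5 U V)
    rw [hz, hz, map_zero, sub_zero, smul_zero]
  tfae_have 4 → 5 := by
    intro h4 X Y
    apply (hπmem _).mp
    apply hball _ X Y
    intro A' C hA' hC
    have : ⁅(A' : g), (C : g)⁆ = 0 :=
      h4 A' C ((hrange A').mpr hA') (LinearMap.mem_ker.mpr (hf2 C hC))
    rw [this, map_zero]
  tfae_have 3 → 4 := by
    intro h3 X Y hX hY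
    have hX1 : θ (θ X) = -X := (hrange X).mp hX
    have hY2 : θ Y = -Y := hker Y (LinearMap.mem_ker.mp hY)
    have hP3 : ∀ A' B' : m, θ (θ A') = -A' → θ (θ B') = -B' →
        π ⁅(A' : g), (B' : g)⁆ = 0 := fun A' B' ha hb =>
      (hπmem _).mpr (h3 A' B' ((hrange A').mpr ha) ((hrange B').mpr hb))
    have hQ := hP3Q hP3
    have key : ∀ A' : m, θ (θ A') = -A' →
        ⁅(A' : g), (Y : g)⁆ = -⁅((θ A') : g), (Y : g)⁆ := by
      intro A' hA'
      have hin : ⁅(A' : g), (Y : g)⁆ ∈ h := (hπmem _).mp (hQ A' Y hA' hY2)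
      have e1 : φ ⁅(A' : g), (Y : g)⁆ = ⁅(A' : g), (Y : g)⁆ := hfix _ hin
      have e2 : φ ⁅(A' : g), (Y : g)⁆ = ⁅((θ A') : g), ((θ Y) : g)⁆ := by
        rw [hlie, ← hθ, ← hθ]
      rw [e1, hY2] at e2
      rw [e2]
      simp only [NegMemClass.coe_neg, lie_neg]
    have e3 := key X hX1
    have e4 := key (θ X) (hθm1 X hX1)
    rw [hX1] at e4
    have e5 : ⁅((θ X) : g), (Y : g)⁆ = ⁅(X : g), (Y : g)⁆ := by
      rw [e4]
      simp only [NegMemClass.coe_neg, neg_lie, neg_neg]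
    rw [e5] at e3
    have e6 : (2 : ℝ) • ⁅(X : g), (Y : g)⁆ = 0 := by
      rw [two_smul]
      nth_rewrite 1 [e3]
      abel
    exact (smul_eq_zero.mp e6).resolve_left (by norm_num)
  tfae_finish
end

section
/- Let g = h ⊕ m be a finite-dimensional real Lie algebra with a vector-space direct sum decomposition, ⟨·,·⟩ a naturally reductive inner product on m, and f: m → m a metric f-structure satisfying the Killing condition [X, fX]_m = 0 for all X ∈ m (equivalently, (∇_X f)(X) = 0 for all X ∈ m, where (∇_X f)(Y) = ½([X, fY]_m − f([X,Y]_m))). Set m₁ = im f and m₂ = ker f. Then [m₁, m₁] ⊆ m₁ ⊕ h, [m₂, m₂] ⊆ m₂ ⊕ h, and [m₁, m₂] ⊆ h. (On a naturally reductive Killing f-manifold, both fundamental distributions of the Killing f-structure generate invariant totally geodesic foliations.) -/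
/-- On a naturally reductive Killing f-manifold the fundamental
distributions m₁ = im f and m₂ = ker f satisfy [m₁,m₁] ⊆ m₁ ⊕ h,
[m₂,m₂] ⊆ m₂ ⊕ h, and [m₁,m₂] ⊆ h. -/
theorem stmt_19 (g : Type*) [LieRing g] [LieAlgebra ℝ g] [FiniteDimensional ℝ g]
    (h m : Submodule ℝ g) (hc : IsCompl h m)
    (B : m →ₗ[ℝ] m →ₗ[ℝ] ℝ)
    (hBsymm : ∀ X Y : m, B X Y = B Y X)
    (hBpos : ∀ X : m, X ≠ 0 → 0 < B X X)
    (hBnat : ∀ X Y Z : m,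
      B (m.linearProjOfIsCompl h hc.symm ⁅(X : g), (Y : g)⁆) Z =
        B X (m.linearProjOfIsCompl h hc.symm ⁅(Y : g), (Z : g)⁆))
    (f : m →ₗ[ℝ] m)
    (hf3 : ∀ X : m, f (f (f X)) + f X = 0)
    (hfskew : ∀ X Y : m, B (f X) Y + B X (f Y) = 0)
    -- the Killing condition [X, fX]_m = 0 (equivalently (∇_X f)(X) = 0)
    (hkill : ∀ X : m, m.linearProjOfIsCompl h hc.symm ⁅(X : g), (f X : g)⁆ = 0) :
    (∀ X Y : m, X ∈ LinearMap.range f → Y ∈ LinearMap.range f →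
      ⁅(X : g), (Y : g)⁆ ∈ (LinearMap.range f).map m.subtype ⊔ h) ∧
    (∀ X Y : m, X ∈ LinearMap.ker f → Y ∈ LinearMap.ker f →
      ⁅(X : g), (Y : g)⁆ ∈ (LinearMap.ker f).map m.subtype ⊔ h) ∧
    (∀ X Y : m, X ∈ LinearMap.range f → Y ∈ LinearMap.ker f →
      ⁅(X : g), (Y : g)⁆ ∈ h) := by
  set P : g →ₗ[ℝ] m := m.linearProjOfIsCompl h hc.symm with hP
  -- decomposition: for any x, x - P x ∈ h
  have hdec : ∀ x : g, x - (P x : g) ∈ h := by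
    intro x
    have h0 := Submodule.projection_add_projection_eq_self hc x
    have h1 : (h.linearProjOfIsCompl m hc x : g) = x - (P x : g) := by
      rw [eq_sub_iff_add_eq]; exact h0
    rw [← h1]; exact (h.linearProjOfIsCompl m hc x).2
  -- polarized Killing condition
  have hkill2 : ∀ X Y : m, P ⁅(X : g), ((f Y : m) : g)⁆ + P ⁅(Y : g), ((f X : m) : g)⁆ = 0 := by
    intro X Y
    have hk := hkill (X + Y)
    have hXY : ((X + Y : m) : g) = (X : g) + (Y : g) := rfl
    have hfXY : ((f (X + Y) : m) : g) = ((f X : m) : g) + ((f Y : m) : g) := by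
      rw [map_add]; rfl
    rw [hXY, hfXY, add_lie, lie_add, lie_add, map_add, map_add, map_add] at hk
    rw [hkill X, hkill Y] at hk
    rw [← hk]; abel
  -- projection kills [ker f, range f]
  have hk3 : ∀ Y W : m, f Y = 0 → P ⁅(Y : g), ((f W : m) : g)⁆ = 0 := by
    intro Y W hY
    have := hkill2 W Y
    rw [hY] at this
    simpa using this
  have hk3' : ∀ X Y : m, X ∈ LinearMap.range f → Y ∈ LinearMap.ker f →
      P ⁅(X : g), (Y : g)⁆ = 0 := by
    intro X Y hX hY
    obtain ⟨W, rfl⟩ := hX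
    have hfY : f Y = 0 := hY
    have := hk3 Y W hfY
    have hneg : ⁅(f W : g), (Y : g)⁆ = -⁅(Y : g), ((f W : m) : g)⁆ := by
      rw [lie_skew]
    rw [hneg, map_neg, this, neg_zero]
  -- B-orthogonality to range f implies ker
  have horth : ∀ V : m, (∀ W : m, B V (f W) = 0) → f V = 0 := by
    intro V hV
    by_contra hne
    have hpos := hBpos (f V) hne
    have := hfskew V (f V)
    have h2 : B V (f (f V)) = 0 := hV (f V)
    have h3 : B (f V) (f V) = 0 := by linarith
    linarith
  -- B V Z = 0 for all Z ∈ ker f when V = P⁅X,Y⁆ with Y ∈ range f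
  refine ⟨?_, ?_, fun X Y hX hY => ?_⟩
  · -- [m₁, m₁] ⊆ m₁ ⊕ h
    intro X Y hX hY
    set V : m := P ⁅(X : g), (Y : g)⁆ with hV
    set K : m := V + f (f V) with hK
    have hfK : f K = 0 := by
      rw [hK, map_add]
      have := hf3 V
      rw [add_comm] at this
      exact this
    have hVZ : ∀ Z : m, f Z = 0 → B V Z = 0 := by
      intro Z hZ
      rw [hV, hBnat]
      rw [hk3' Y Z hY (by exact hZ)]
      simp
    have hKzero : K = 0 := by
      by_contra hne
      have hpos := hBpos K hne
      have h1 : B V K = 0 := hVZ K hfK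
      have h2 : B (f (f V)) K = 0 := by
        have := hfskew (f V) K
        rw [show f K = 0 from hfK] at this
        simpa using this
      have h3 : B K K = 0 := by
        have hBK : B K = B V + B (f (f V)) := by rw [hK, map_add]
        rw [hBK, LinearMap.add_apply, h1, h2, add_zero]
      linarith
    have hVrange : V ∈ LinearMap.range f :=
      ⟨-(f V), by rw [map_neg]; exact neg_eq_of_add_eq_zero_left hKzero⟩
    have heq : ⁅(X : g), (Y : g)⁆ = (V : g) + (⁅(X : g), (Y : g)⁆ - (V : g)) := by abel
    rw [heq]
    exact Submodule.add_mem_sup ⟨V, hVrange, rfl⟩ (hdec _)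
  · -- [m₂, m₂] ⊆ m₂ ⊕ h
    intro X Y hX hY
    set V : m := P ⁅(X : g), (Y : g)⁆ with hV
    have hVker : f V = 0 := by
      apply horth
      intro W
      rw [hV, hBnat]
      rw [hk3 Y W hY]
      simp
    have heq : ⁅(X : g), (Y : g)⁆ = (V : g) + (⁅(X : g), (Y : g)⁆ - (V : g)) := by abel
    rw [heq]
    exact Submodule.add_mem_sup ⟨V, hVker, rfl⟩ (hdec _)
  · -- [m₁, m₂] ⊆ h
    have h0 := hk3' X Y hX hY
    have := hdec ⁅(X : g), (Y : g)⁆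
    rw [h0] at this
    simpa using this
end
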